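/- For all x, z, x* ∈ ℝ^d and every α > 0, if ‖x − z‖ < α, then |exp(−‖x − x*‖²/2) − exp(−‖z − x*‖²/2)| < 1 − exp(−α(‖z − x*‖ + 3α/2)). -/

import Mathlib

/-! Writing `a = ‖x - x*‖` and `b = ‖z - x*‖`, the triangle inequality gives `|a - b| < α`, hence
`|a² - b²| = |a - b| |a + b| < α (2b + α)`. For `0 ≤ u ≤ v` one has
`e^{-u} - e^{-v} = e^{-u} (1 - e^{-(v - u)}) ≤ 1 - e^{-(v - u)}`, which bounds the difference of the two
Gaussians by `1 - exp (-|a² - b²| / 2)`. -/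

open Real

theorem abs_exp_neg_sub_exp_neg_le {u v : ℝ} (hu : 0 ≤ u) (hv : 0 ≤ v) :
    |exp (-u) - exp (-v)| ≤ 1 - exp (-|u - v|) := by
  wlog huv : u ≤ v generalizing u v
  · rw [abs_sub_comm, abs_sub_comm u]
    exact this hv hu (le_of_not_ge huv)
  have hfactor : exp (-u) - exp (-v) = exp (-u) * (1 - exp (-(v - u))) := by
    rw [mul_sub, mul_one, ← exp_add]
    ring_nf
  rw [abs_of_nonneg (sub_nonneg.2 (exp_le_exp.2 (neg_le_neg huv))), abs_sub_comm,
    abs_of_nonneg (sub_nonneg.2 huv), hfactor]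
  exact mul_le_of_le_one_left (sub_nonneg.2 (exp_le_one_iff.2 (by linarith)))
    (exp_le_one_iff.2 (by linarith))

theorem abs_sq_sub_sq_lt {a b α : ℝ} (hab : |a - b| < α) (hb : 0 ≤ b) :
    |a ^ 2 - b ^ 2| < α * (2 * b + α) := by
  have hsum : |a + b| ≤ |a - b| + 2 * b := by
    calc |a + b| = |(a - b) + 2 * b| := by ring_nf
      _ ≤ |a - b| + |2 * b| := abs_add_le _ _
      _ = |a - b| + 2 * b := by rw [abs_mul, abs_two, abs_of_nonneg hb]
  calc |a ^ 2 - b ^ 2| = |a - b| * |a + b| := by rw [← abs_mul]; ring_nf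
    _ ≤ |a - b| * (|a - b| + 2 * b) := by gcongr
    _ < α * (2 * b + α) := by nlinarith [abs_nonneg (a - b)]

theorem stmt_4_general (d : ℕ) (x z xstar : EuclideanSpace ℝ (Fin d)) (α : ℝ)
    (h1 : ‖x - z‖ < α) :
    |Real.exp (-‖x - xstar‖ ^ 2 / 2) - Real.exp (-‖z - xstar‖ ^ 2 / 2)| <
      1 - Real.exp (-(α * (‖z - xstar‖ + 3 * α / 2))) := by
  set a := ‖x - xstar‖
  set b := ‖z - xstar‖
  have hab : |a - b| < α := by
    simpa using (abs_norm_sub_norm_le (x - xstar) (z - xstar)).trans_lt (by simpa using h1)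
  have hα : 0 ≤ α := (abs_nonneg _).trans hab.le
  have hsq : |a ^ 2 / 2 - b ^ 2 / 2| < α * (b + 3 * α / 2) := by
    have := abs_sq_sub_sq_lt hab (norm_nonneg _)
    rw [← sub_div, abs_div, abs_two, div_lt_iff₀ two_pos]
    nlinarith
  calc |exp (-a ^ 2 / 2) - exp (-b ^ 2 / 2)| = |exp (-(a ^ 2 / 2)) - exp (-(b ^ 2 / 2))| := by
        ring_nf
    _ ≤ 1 - exp (-|a ^ 2 / 2 - b ^ 2 / 2|) := abs_exp_neg_sub_exp_neg_le (by positivity) (by positivity)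
    _ < 1 - exp (-(α * (b + 3 * α / 2))) := by gcongr

/-- error bound for the Gaussian covariance function at a new input. -/
theorem stmt_4 (d : ℕ) (x z xstar : EuclideanSpace ℝ (Fin d)) (α : ℝ) (hα : 0 < α)
    (h1 : ‖x - z‖ < α) :
    |Real.exp (-‖x - xstar‖ ^ 2 / 2) - Real.exp (-‖z - xstar‖ ^ 2 / 2)| <
      1 - Real.exp (-(α * (‖z - xstar‖ + 3 * α / 2))) :=
  stmt_4_general d x z xstar α h1
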